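/- arXiv:gr-qc/0504147 — 5 statements merged into one kernel-verified Lean document; each statement's English description precedes it below -/
import Mathlib

section
/- Let X be a nonempty set and let A be a unital complex subalgebra of the algebra of all bounded functions X → ℂ which is closed under pointwise complex conjugation and has the property that for every real-valued Φ ∈ A and every real number c > sup_{x∈X} |Φ(x)|, the function x ↦ √(c − Φ(x)) again belongs to A. Suppose ω : A → ℂ is a linear functional satisfying ω(conj Ψ) = conj(ω(Ψ)), ω((conj Ψ)·Ψ) ≥ 0 for every Ψ ∈ A, and ω(1) = 1. Then |ω(Ψ)| ≤ 2·sup_{x∈X}|Ψ(x)| for every Ψ ∈ A. (Consequently ω is continuous for the sup norm.) -/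
/-!
For real-valued `Φ ∈ A` and `c > sup |Φ|`, the function `S = √(c − Φ)` lies in `A` and
`(conj S)·S = c − Φ`, so positivity gives `0 ≤ ω (c − Φ) = c − ω Φ` in the partial order of `ℂ`.
Applied to `±Φ` this makes `ω Φ` real with `|ω Φ| ≤ sup |Φ|`. A general `Ψ ∈ A` is
`Re Ψ + i Im Ψ` with both parts in `A` (by closure under conjugation) and of sup norm at most
`sup |Ψ|`, whence the factor `2`.
-/

open scoped ComplexOrder

namespace uniqLQG

variable {X : Type*} {A : Subalgebra ℂ (X → ℂ)} {ω : (X → ℂ) → ℂ}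

def IsLinearOn (A : Subalgebra ℂ (X → ℂ)) (ω : (X → ℂ) → ℂ) : Prop :=
  ∀ α : ℂ, ∀ Ψ ∈ A, ∀ Ψ' ∈ A, ω (α • Ψ + Ψ') = α * ω Ψ + ω Ψ'

namespace IsLinearOn

theorem map_zero (hlin : IsLinearOn A ω) : ω 0 = 0 := by
  simpa using hlin 1 0 A.zero_mem 0 A.zero_mem

theorem map_smul (hlin : IsLinearOn A ω) (α : ℂ) {Ψ : X → ℂ} (hΨ : Ψ ∈ A) :
    ω (α • Ψ) = α * ω Ψ := by
  simpa [hlin.map_zero] using hlin α Ψ hΨ 0 A.zero_mem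

theorem map_neg (hlin : IsLinearOn A ω) {Ψ : X → ℂ} (hΨ : Ψ ∈ A) : ω (-Ψ) = -ω Ψ := by
  simpa using hlin.map_smul (-1) hΨ

theorem map_const_sub (hlin : IsLinearOn A ω) (hone : ω 1 = 1) (c : ℂ) {Ψ : X → ℂ}
    (hΨ : Ψ ∈ A) : ω (c • 1 - Ψ) = c - ω Ψ := by
  have h := hlin (-1) Ψ hΨ (c • 1) (A.smul_mem A.one_mem c)
  rw [hlin.map_smul c A.one_mem, hone] at h
  rw [sub_eq_neg_add, ← neg_one_smul ℂ Ψ, h]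
  ring

end IsLinearOn

theorem conj_sqrt_mul_sqrt_sub_re {z : ℂ} (hz : z.im = 0) {c : ℝ} (hc : z.re ≤ c) :
    starRingEnd ℂ (√(c - z.re) : ℂ) * (√(c - z.re) : ℂ) = c - z := by
  rw [Complex.conj_ofReal, ← Complex.ofReal_mul, Real.mul_self_sqrt (sub_nonneg.2 hc),
    Complex.ofReal_sub]
  congr 1
  exact Complex.ext rfl (by simp [hz])

theorem le_of_sqrt_sub_mem (hlin : IsLinearOn A ω)
    (hpos : ∀ Ψ ∈ A, 0 ≤ ω (fun x => (starRingEnd ℂ) (Ψ x) * Ψ x)) (hone : ω 1 = 1)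
    {Φ : X → ℂ} (hΦ : Φ ∈ A) (him : ∀ x, (Φ x).im = 0) {c : ℝ} (hc : ∀ x, (Φ x).re ≤ c)
    (hS : (fun x => (√(c - (Φ x).re) : ℂ)) ∈ A) : ω Φ ≤ c := by
  have hsq : (fun x => starRingEnd ℂ (√(c - (Φ x).re) : ℂ) * (√(c - (Φ x).re) : ℂ))
      = (c : ℂ) • 1 - Φ := by
    funext x
    simpa using conj_sqrt_mul_sqrt_sub_re (him x) (hc x)
  have h := hpos _ hS
  rw [hsq, hlin.map_const_sub hone c hΦ] at h
  exact sub_nonneg.1 h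

theorem norm_le_iSup_of_im_eq_zero (hlin : IsLinearOn A ω)
    (hpos : ∀ Ψ ∈ A, 0 ≤ ω (fun x => (starRingEnd ℂ) (Ψ x) * Ψ x)) (hone : ω 1 = 1)
    (hsqrt : ∀ Φ ∈ A, (∀ x : X, (Φ x).im = 0) →
      ∀ c : ℝ, (⨆ x : X, ‖Φ x‖) < c → (fun x => (√(c - (Φ x).re) : ℂ)) ∈ A)
    {Φ : X → ℂ} (hΦ : Φ ∈ A) (him : ∀ x, (Φ x).im = 0)
    (hbdd : BddAbove (Set.range fun x => ‖Φ x‖)) :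
    ‖ω Φ‖ ≤ ⨆ x : X, ‖Φ x‖ := by
  set M := ⨆ x : X, ‖Φ x‖
  have hre_le {Θ : X → ℂ} (hΘ : ∀ x, ‖Θ x‖ ≤ M) {c : ℝ} (hc : M < c) x : (Θ x).re ≤ c :=
    (Complex.re_le_norm _).trans ((hΘ x).trans hc.le)
  have hupper {c : ℝ} (hc : M < c) : ω Φ ≤ c :=
    le_of_sqrt_sub_mem hlin hpos hone hΦ him (hre_le (le_ciSup hbdd) hc) (hsqrt Φ hΦ him c hc)
  have hlower {c : ℝ} (hc : M < c) : -ω Φ ≤ c := by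
    have hnorm : ∀ x, ‖(-Φ) x‖ = ‖Φ x‖ := fun x => norm_neg _
    have hnegim : ∀ x, ((-Φ) x).im = 0 := fun x => by simp [him x]
    rw [← hlin.map_neg hΦ]
    refine le_of_sqrt_sub_mem hlin hpos hone (A.neg_mem hΦ) hnegim
      (hre_le (fun x => (hnorm x).trans_le (le_ciSup hbdd x)) hc) ?_
    exact hsqrt _ (A.neg_mem hΦ) hnegim c (by simpa only [hnorm] using hc)
  obtain ⟨-, hωim⟩ := Complex.le_def.1 (hupper (lt_add_one M))
  rw [← Complex.abs_re_eq_norm.2 hωim, abs_le']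
  constructor <;> refine le_of_forall_gt_imp_ge_of_dense fun c hc => ?_
  · simpa using (Complex.le_def.1 (hupper hc)).1
  · simpa using (Complex.le_def.1 (hlower hc)).1

theorem re_mem {Ψ : X → ℂ} (hΨ : Ψ ∈ A) (hconj : (fun x => (starRingEnd ℂ) (Ψ x)) ∈ A) :
    (fun x => ((Ψ x).re : ℂ)) ∈ A := by
  have h : (fun x => ((Ψ x).re : ℂ)) = (2⁻¹ : ℂ) • (Ψ + fun x => (starRingEnd ℂ) (Ψ x)) := by
    funext x
    simp [Complex.add_conj]
  rw [h]
  exact A.smul_mem (A.add_mem hΨ hconj) _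

theorem im_mem {Ψ : X → ℂ} (hΨ : Ψ ∈ A) (hconj : (fun x => (starRingEnd ℂ) (Ψ x)) ∈ A) :
    (fun x => ((Ψ x).im : ℂ)) ∈ A := by
  have h : (fun x => ((Ψ x).im : ℂ))
      = (-Complex.I / 2) • (Ψ - fun x => (starRingEnd ℂ) (Ψ x)) := by
    funext x
    simp only [Pi.smul_apply, Pi.sub_apply, smul_eq_mul, Complex.sub_conj]
    field_simp
    push_cast
    linear_combination (2 * (Ψ x).im : ℂ) * Complex.I_mul_I
  rw [h]
  exact A.smul_mem (A.sub_mem hΨ hconj) _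

end uniqLQG

theorem uniqLQG.state_bounded_by_twice_sup_norm_general
    {X : Type*} (A : Subalgebra ℂ (X → ℂ))
    (hbdd : ∀ Ψ ∈ A, ∃ C : ℝ, ∀ x : X, ‖Ψ x‖ ≤ C)
    (hconj : ∀ Ψ ∈ A, (fun x => (starRingEnd ℂ) (Ψ x)) ∈ A)
    (hsqrt : ∀ Φ ∈ A, (∀ x : X, (Φ x).im = 0) →
      ∀ c : ℝ, (⨆ x : X, ‖Φ x‖) < c →
        (fun x => (Real.sqrt (c - (Φ x).re) : ℂ)) ∈ A)
    (ω : (X → ℂ) → ℂ)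
    (hlin : ∀ α : ℂ, ∀ Ψ ∈ A, ∀ Ψ' ∈ A, ω (α • Ψ + Ψ') = α * ω Ψ + ω Ψ')
    (hpos : ∀ Ψ ∈ A, 0 ≤ ω (fun x => (starRingEnd ℂ) (Ψ x) * Ψ x))
    (hone : ω 1 = 1) :
    ∀ Ψ ∈ A, ‖ω Ψ‖ ≤ 2 * ⨆ x : X, ‖Ψ x‖ := by
  intro Ψ hΨ
  have hbddA {Φ : X → ℂ} (hΦ : Φ ∈ A) : BddAbove (Set.range fun x => ‖Φ x‖) :=
    let ⟨C, hC⟩ := hbdd Φ hΦ; ⟨C, Set.forall_mem_range.2 hC⟩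
  have hpart {Φ : X → ℂ} (hΦ : Φ ∈ A) (him : ∀ x, (Φ x).im = 0) (hle : ∀ x, ‖Φ x‖ ≤ ‖Ψ x‖) :
      ‖ω Φ‖ ≤ ⨆ x, ‖Ψ x‖ :=
    (norm_le_iSup_of_im_eq_zero hlin hpos hone hsqrt hΦ him (hbddA hΦ)).trans
      (ciSup_mono (hbddA hΨ) hle)
  have hre := re_mem hΨ (hconj Ψ hΨ)
  have him := im_mem hΨ (hconj Ψ hΨ)
  have hdecomp :
      ω Ψ = Complex.I * ω (fun x => ((Ψ x).im : ℂ)) + ω (fun x => ((Ψ x).re : ℂ)) := by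
    rw [← hlin _ _ him _ hre]
    congr 1
    funext x
    simp only [Pi.add_apply, Pi.smul_apply, smul_eq_mul]
    rw [add_comm, mul_comm, Complex.re_add_im]
  calc ‖ω Ψ‖ ≤ ‖ω (fun x => ((Ψ x).im : ℂ))‖ + ‖ω (fun x => ((Ψ x).re : ℂ))‖ := by
        simpa [hdecomp] using norm_add_le (Complex.I * _) _
    _ ≤ (⨆ x, ‖Ψ x‖) + ⨆ x, ‖Ψ x‖ := by
        gcongr
        · exact hpart him (by simp) fun x => by simpa using Complex.abs_im_le_norm (Ψ x)
        · exact hpart hre (by simp) fun x => by simpa using Complex.abs_re_le_norm (Ψ x)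
    _ = 2 * ⨆ x, ‖Ψ x‖ := by ring

/-- **Lemma 3.1 (abstract form).** Let `X` be a nonempty set and `A` a unital complex
subalgebra of the bounded functions `X → ℂ`, closed under pointwise complex conjugation,
such that for every real-valued `Φ ∈ A` and every real `c > sup |Φ|` the function
`x ↦ √(c − Φ x)` again belongs to `A`.  If `ω` is a linear functional on `A` with
`ω (conj Ψ) = conj (ω Ψ)`, `ω ((conj Ψ)·Ψ) ≥ 0` and `ω 1 = 1`, then
`|ω Ψ| ≤ 2 · sup_x |Ψ x|` for all `Ψ ∈ A`. -/
theorem uniqLQG.state_bounded_by_twice_sup_norm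
    {X : Type*} [Nonempty X] (A : Subalgebra ℂ (X → ℂ))
    (hbdd : ∀ Ψ ∈ A, ∃ C : ℝ, ∀ x : X, ‖Ψ x‖ ≤ C)
    (hconj : ∀ Ψ ∈ A, (fun x => (starRingEnd ℂ) (Ψ x)) ∈ A)
    (hsqrt : ∀ Φ ∈ A, (∀ x : X, (Φ x).im = 0) →
      ∀ c : ℝ, (⨆ x : X, ‖Φ x‖) < c →
        (fun x => (Real.sqrt (c - (Φ x).re) : ℂ)) ∈ A)
    (ω : (X → ℂ) → ℂ)
    (hlin : ∀ α : ℂ, ∀ Ψ ∈ A, ∀ Ψ' ∈ A, ω (α • Ψ + Ψ') = α * ω Ψ + ω Ψ')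
    (hstar : ∀ Ψ ∈ A, ω (fun x => (starRingEnd ℂ) (Ψ x)) = (starRingEnd ℂ) (ω Ψ))
    (hpos : ∀ Ψ ∈ A, 0 ≤ ω (fun x => (starRingEnd ℂ) (Ψ x) * Ψ x))
    (hone : ω 1 = 1) :
    ∀ Ψ ∈ A, ‖ω Ψ‖ ≤ 2 * ⨆ x : X, ‖Ψ x‖ :=
  uniqLQG.state_bounded_by_twice_sup_norm_general A hbdd hconj hsqrt ω hlin hpos hone
end

section
/- Let X be a nonempty set and let A be a unital complex subalgebra of the algebra of all bounded functions X → ℂ which is closed under pointwise complex conjugation and has the property that for every real-valued Φ ∈ A and every real number c > sup_{x∈X} |Φ(x)|, the function x ↦ √(c − Φ(x)) again belongs to A. Suppose ω : A → ℂ is a linear functional satisfying ω(conj Ψ) = conj(ω(Ψ)), ω((conj Ψ)·Ψ) ≥ 0 for every Ψ ∈ A, and ω(1) = 1. Then for every real-valued Ψ ∈ A the number ω(Ψ) is real and satisfies |ω(Ψ)| ≤ sup_{x∈X}|Ψ(x)|. -/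
open scoped ComplexOrder

/-! A real-valued `Ψ ∈ A` with `sup |Ψ| < c` makes `c - Ψ` the square `conj S * S` of the real
function `S = √(c - Ψ) ∈ A`, so positivity of `ω` gives `0 ≤ ω (c - Ψ) = c - ω Ψ` in the
partial order of `ℂ`. This forces `ω Ψ` to be real with `ω Ψ ≤ c`; applied to `±Ψ` and every
`c > sup |Ψ|` it yields `|ω Ψ| ≤ sup |Ψ|`. -/

def Submodule.linearMapOfMapSMulAdd {R M N : Type*} [Semiring R] [AddCommMonoid M]
    [Module R M] [AddCommGroup N] [Module R N] (p : Submodule R M) (f : M → N)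
    (hf : ∀ a : R, ∀ x ∈ p, ∀ y ∈ p, f (a • x + y) = a • f x + f y) : p →ₗ[R] N where
  toFun x := f x
  map_add' x y := by simpa using hf 1 x x.2 y y.2
  map_smul' a x := by
    have hf0 : f 0 = 0 := by simpa using hf 1 0 p.zero_mem 0 p.zero_mem
    simpa [hf0] using hf a x x.2 0 p.zero_mem

@[simp]
theorem Submodule.linearMapOfMapSMulAdd_apply {R M N : Type*} [Semiring R]
    [AddCommMonoid M] [Module R M] [AddCommGroup N] [Module R N] (p : Submodule R M) (f : M → N)
    (hf : ∀ a : R, ∀ x ∈ p, ∀ y ∈ p, f (a • x + y) = a • f x + f y) (x : p) :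
    p.linearMapOfMapSMulAdd f hf x = f x :=
  rfl

theorem re_le_of_iSup_norm_lt {X : Type*} {Φ : X → ℂ} (hΦ : BddAbove (Set.range fun x => ‖Φ x‖))
    {c : ℝ} (hc : ⨆ x, ‖Φ x‖ < c) (x : X) : (Φ x).re ≤ c :=
  calc (Φ x).re ≤ ‖Φ x‖ := Complex.re_le_norm _
    _ ≤ ⨆ x, ‖Φ x‖ := le_ciSup hΦ x
    _ ≤ c := hc.le

theorem conj_mul_self_sqrt_sub_re {X : Type*} {Φ : X → ℂ} (hreal : ∀ x, (Φ x).im = 0) {c : ℝ}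
    (hle : ∀ x, (Φ x).re ≤ c) :
    (fun x => (starRingEnd ℂ) (Real.sqrt (c - (Φ x).re) : ℂ) * Real.sqrt (c - (Φ x).re))
      = (c : ℂ) • 1 - Φ := by
  funext x
  rw [Complex.conj_ofReal, ← Complex.ofReal_mul, Real.mul_self_sqrt (sub_nonneg.mpr (hle x))]
  apply Complex.ext <;> simp [hreal x]

theorem apply_le_of_iSup_norm_lt {X : Type*} (A : Subalgebra ℂ (X → ℂ))
    (hsqrt : ∀ Φ ∈ A, (∀ x : X, (Φ x).im = 0) →
      ∀ c : ℝ, (⨆ x : X, ‖Φ x‖) < c →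
        (fun x => (Real.sqrt (c - (Φ x).re) : ℂ)) ∈ A)
    (ω : (X → ℂ) → ℂ)
    (hlin : ∀ α : ℂ, ∀ Ψ ∈ A, ∀ Ψ' ∈ A, ω (α • Ψ + Ψ') = α * ω Ψ + ω Ψ')
    (hpos : ∀ Ψ ∈ A, 0 ≤ ω (fun x => (starRingEnd ℂ) (Ψ x) * Ψ x))
    (hone : ω 1 = 1) {Φ : X → ℂ} (hΦ : Φ ∈ A) (hreal : ∀ x, (Φ x).im = 0)
    (hbdd : BddAbove (Set.range fun x => ‖Φ x‖)) {c : ℝ} (hc : ⨆ x, ‖Φ x‖ < c) :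
    ω Φ ≤ c := by
  let L := A.toSubmodule.linearMapOfMapSMulAdd ω hlin
  have hsq := hpos _ (hsqrt Φ hΦ hreal c hc)
  rw [conj_mul_self_sqrt_sub_re hreal (re_le_of_iSup_norm_lt hbdd hc)] at hsq
  have hsub : ω ((c : ℂ) • 1 - Φ) = c - ω Φ := by
    have := L.map_sub ((c : ℂ) • ⟨1, A.one_mem⟩) ⟨Φ, hΦ⟩
    rw [L.map_smul] at this
    simpa [L, hone] using this
  rwa [hsub, sub_nonneg] at hsq

theorem Complex.im_eq_zero_and_norm_le_of_le_of_neg_le {z : ℂ} {c : ℝ} (h : z ≤ c)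
    (hneg : -z ≤ c) : z.im = 0 ∧ ‖z‖ ≤ c := by
  rw [Complex.le_def] at h hneg
  simp only [Complex.ofReal_re, Complex.ofReal_im, Complex.neg_re] at h hneg
  have hz : z = (z.re : ℂ) := Complex.ext rfl (by simpa using h.2)
  refine ⟨h.2, ?_⟩
  rw [hz, Complex.norm_real, Real.norm_eq_abs]
  exact abs_le.mpr ⟨by linarith, h.1⟩

theorem uniqLQG.state_real_valued_estimate_general
    {X : Type*} (A : Subalgebra ℂ (X → ℂ))
    (hbdd : ∀ Ψ ∈ A, ∃ C : ℝ, ∀ x : X, ‖Ψ x‖ ≤ C)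
    (hsqrt : ∀ Φ ∈ A, (∀ x : X, (Φ x).im = 0) →
      ∀ c : ℝ, (⨆ x : X, ‖Φ x‖) < c →
        (fun x => (Real.sqrt (c - (Φ x).re) : ℂ)) ∈ A)
    (ω : (X → ℂ) → ℂ)
    (hlin : ∀ α : ℂ, ∀ Ψ ∈ A, ∀ Ψ' ∈ A, ω (α • Ψ + Ψ') = α * ω Ψ + ω Ψ')
    (hpos : ∀ Ψ ∈ A, 0 ≤ ω (fun x => (starRingEnd ℂ) (Ψ x) * Ψ x))
    (hone : ω 1 = 1) :
    ∀ Ψ ∈ A, (∀ x : X, (Ψ x).im = 0) →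
      (ω Ψ).im = 0 ∧ ‖ω Ψ‖ ≤ ⨆ x : X, ‖Ψ x‖ := by
  intro Ψ hΨ hreal
  have hbddΨ : BddAbove (Set.range fun x => ‖Ψ x‖) := by
    obtain ⟨C, hC⟩ := hbdd Ψ hΨ
    exact ⟨C, Set.forall_mem_range.mpr hC⟩
  have hωneg : ω (-Ψ) = -ω Ψ := by
    have := (A.toSubmodule.linearMapOfMapSMulAdd ω hlin).map_neg ⟨Ψ, hΨ⟩
    simp only [Submodule.linearMapOfMapSMulAdd_apply, NegMemClass.coe_neg] at this
    exact this
  have hbound : ∀ c : ℝ, ⨆ x, ‖Ψ x‖ < c → (ω Ψ).im = 0 ∧ ‖ω Ψ‖ ≤ c := fun c hc =>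
    Complex.im_eq_zero_and_norm_le_of_le_of_neg_le
      (apply_le_of_iSup_norm_lt A hsqrt ω hlin hpos hone hΨ hreal hbddΨ hc)
      (hωneg ▸ apply_le_of_iSup_norm_lt A hsqrt ω hlin hpos hone (A.neg_mem hΨ)
        (by simpa using hreal) (by simpa using hbddΨ) (by simpa using hc))
  exact ⟨(hbound _ (lt_add_one _)).1,
    le_of_forall_gt_imp_ge_of_dense fun c hc => (hbound c hc).2⟩

/-- **Key estimate inside Lemma 3.1.** Under the same hypotheses as the abstract form of
Lemma 3.1 (a unital conjugation-closed subalgebra `A` of bounded functions `X → ℂ`, closed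
under `Φ ↦ √(c − Φ)` for real-valued `Φ ∈ A` and `c > sup |Φ|`, and a normalized positive
`*`-invariant linear functional `ω` on `A`), for every real-valued `Ψ ∈ A` the number
`ω Ψ` is real and `|ω Ψ| ≤ sup_x |Ψ x|`. -/
theorem uniqLQG.state_real_valued_estimate
    {X : Type*} [Nonempty X] (A : Subalgebra ℂ (X → ℂ))
    (hbdd : ∀ Ψ ∈ A, ∃ C : ℝ, ∀ x : X, ‖Ψ x‖ ≤ C)
    (hconj : ∀ Ψ ∈ A, (fun x => (starRingEnd ℂ) (Ψ x)) ∈ A)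
    (hsqrt : ∀ Φ ∈ A, (∀ x : X, (Φ x).im = 0) →
      ∀ c : ℝ, (⨆ x : X, ‖Φ x‖) < c →
        (fun x => (Real.sqrt (c - (Φ x).re) : ℂ)) ∈ A)
    (ω : (X → ℂ) → ℂ)
    (hlin : ∀ α : ℂ, ∀ Ψ ∈ A, ∀ Ψ' ∈ A, ω (α • Ψ + Ψ') = α * ω Ψ + ω Ψ')
    (hstar : ∀ Ψ ∈ A, ω (fun x => (starRingEnd ℂ) (Ψ x)) = (starRingEnd ℂ) (ω Ψ))
    (hpos : ∀ Ψ ∈ A, 0 ≤ ω (fun x => (starRingEnd ℂ) (Ψ x) * Ψ x))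
    (hone : ω 1 = 1) :
    ∀ Ψ ∈ A, (∀ x : X, (Ψ x).im = 0) →
      (ω Ψ).im = 0 ∧ ‖ω Ψ‖ ≤ ⨆ x : X, ‖Ψ x‖ :=
  uniqLQG.state_real_valued_estimate_general A hbdd hsqrt ω hlin hpos hone
end

section
/- Let D ≥ 1, let U′ ⊆ ℝ^D be open, and let m ≥ 1. Let h′ : ℝ^{D−1} → ℝ and κ′ : ℝ → ℝ be semianalytic functions of class C^m such that κ′(0) = 1 and the function (x¹,…,x^D) ↦ h′(x¹,…,x^{D−1})·κ′(x^D) has compact support contained in U′. Define φ′_λ : ℝ^D → ℝ^D by φ′_λ(x¹,…,x^D) = (x¹ + λ·h′(x¹,…,x^{D−1})·κ′(x^D), x², …, x^D). Then there exists λ₀ > 0 such that for every 0 < λ < λ₀, φ′_λ is a C^m diffeomorphism of ℝ^D which is semianalytic together with its inverse, is equal to the identity outside U′, and maps U′ onto U′. -/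
/-!
Write `φ'_λ = x + λ F(x) e₁` with `F(x) = h'(x¹,…,x^{D−1}) κ'(x^D)`. Being `C¹` with compact
support, `F` is `K`-Lipschitz, so for `λ K < 1` the map `φ'_λ` is the identity plus a contraction,
hence a homeomorphism; its derivative `1 + λ e₁ ⊗ dF` is invertible everywhere, so the inverse is
`C^m`, and it is the identity off `supp F`.

For semianalyticity of the inverse, near each point `x` the map `φ'_λ` coincides on every cell with
the analytic shear built from an analytic piece `g_σ` of `F`. Compactness of the support bounds the
derivatives of these pieces at `x` uniformly by some `M`, so for `λ M < 1` every piece is a local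
analytic diffeomorphism at `x`. Near `φ'_λ(x)` the inverse is then given by the local inverses of
the pieces whose cell accumulates at `x`, on the partition obtained by pulling the functions that
define the cells back along these local inverses.
-/

/-- A sign, one of `>`, `=`, `<`, used in the definition of semianalytic partitions. -/
inductive Sign : Type
  | pos : Sign
  | zero : Sign
  | neg : Sign

/-- `s.holds r` means that the real number `r` satisfies the (in)equality prescribed by the
sign `s`, i.e. `r > 0`, `r = 0` or `r < 0`. -/
def Sign.holds : Sign → ℝ → Prop
  | .pos, r => 0 < r
  | .zero, r => r = 0
  | .neg, r => r < 0

/-- The cell `U_{h,σ}` of the (semi)analytic partition `P(U,h)` determined by the sign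
assignment `σ`: the set of `x ∈ U` such that `h I x` satisfies the sign condition `σ I`
for every `I`. -/
def saCell {E : Type*} (U : Set E) {N : ℕ} (h : Fin N → E → ℝ) (σ : Fin N → Sign) : Set E :=
  {x ∈ U | ∀ I, (σ I).holds (h I x)}

/-- A function `f` defined on an open set `U` is semianalytic if every `x ∈ U` has an open
neighborhood `V ⊆ U` together with a finite family `h` of functions analytic on `V`
(a semianalytic partition `P(V,h)`) such that on every cell of the partition, `f` coincides
with a function analytic on `V`. -/
def SemianalyticOn {E F : Type*} [NormedAddCommGroup E] [NormedSpace ℝ E]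
    [NormedAddCommGroup F] [NormedSpace ℝ F] (f : E → F) (U : Set E) : Prop :=
  ∀ x ∈ U, ∃ V : Set E, IsOpen V ∧ x ∈ V ∧ V ⊆ U ∧
    ∃ (N : ℕ) (h : Fin N → E → ℝ), (∀ I, AnalyticOnNhd ℝ (h I) V) ∧
      ∀ σ : Fin N → Sign, ∃ g : E → F, AnalyticOnNhd ℝ g V ∧
        Set.EqOn f g (saCell V h σ)

/-- The map `φ'_λ(x¹,…,x^D) = (x¹ + λ·h'(x¹,…,x^{D−1})·κ'(x^D), x², …, x^D)` of Lemma 4.2,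
on `ℝ^D` with `D = d + 1`. -/
noncomputable def phiLam (d : ℕ) (h' : (Fin d → ℝ) → ℝ) (κ' : ℝ → ℝ) (lam : ℝ)
    (x : Fin (d + 1) → ℝ) : Fin (d + 1) → ℝ :=
  Function.update x 0 (x 0 + lam * (h' (x ∘ Fin.castSucc) * κ' (x (Fin.last d))))

open Set Filter Topology
open scoped ContDiff

instance : Finite Sign :=
  Finite.of_surjective ![Sign.pos, Sign.zero, Sign.neg] fun s => by
    cases s
    exacts [⟨0, rfl⟩, ⟨1, rfl⟩, ⟨2, rfl⟩]

theorem Sign.exists_holds (r : ℝ) : ∃ s : Sign, s.holds r := by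
  rcases lt_trichotomy r 0 with h | h | h
  exacts [⟨.neg, h⟩, ⟨.zero, h⟩, ⟨.pos, h⟩]

theorem Sign.holds.unique {s t : Sign} {r : ℝ} (hs : s.holds r) (ht : t.holds r) : s = t := by
  cases s <;> cases t <;> simp only [Sign.holds] at hs ht <;> first | rfl | (exfalso; linarith)

section Semianalytic

variable {E F G : Type*} [NormedAddCommGroup E] [NormedSpace ℝ E]
  [NormedAddCommGroup F] [NormedSpace ℝ F] [NormedAddCommGroup G] [NormedSpace ℝ G]

theorem semianalyticOn_of_finite_index {f : E → F} {U : Set E}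
    (H : ∀ x ∈ U, ∃ V : Set E, IsOpen V ∧ x ∈ V ∧ V ⊆ U ∧
      ∃ (ι : Type) (_ : Finite ι) (h : ι → E → ℝ), (∀ I, AnalyticOnNhd ℝ (h I) V) ∧
        ∀ σ : ι → Sign, ∃ g : E → F, AnalyticOnNhd ℝ g V ∧
          EqOn f g {y ∈ V | ∀ I, (σ I).holds (h I y)}) :
    SemianalyticOn f U := by
  intro x hx
  obtain ⟨V, hV, hxV, hVU, ι, _, h, hh, hpieces⟩ := H x hx
  let e := Finite.equivFin ι
  refine ⟨V, hV, hxV, hVU, Nat.card ι, h ∘ e.symm, fun I => hh _, fun σ => ?_⟩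
  obtain ⟨g, hg, hfg⟩ := hpieces (σ ∘ e)
  exact ⟨g, hg, fun y hy => hfg ⟨hy.1, fun I => by simpa using hy.2 (e I)⟩⟩

theorem SemianalyticOn.mul {f g : E → ℝ} {U : Set E} (hf : SemianalyticOn f U)
    (hg : SemianalyticOn g U) : SemianalyticOn (f * g) U := by
  refine semianalyticOn_of_finite_index fun x hx => ?_
  obtain ⟨V₁, hV₁, hxV₁, hV₁U, N₁, h₁, hh₁, hf'⟩ := hf x hx
  obtain ⟨V₂, hV₂, hxV₂, -, N₂, h₂, hh₂, hg'⟩ := hg x hx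
  refine ⟨V₁ ∩ V₂, hV₁.inter hV₂, ⟨hxV₁, hxV₂⟩, inter_subset_left.trans hV₁U, Fin N₁ ⊕ Fin N₂,
    inferInstance, Sum.elim h₁ h₂, ?_, fun σ => ?_⟩
  · rintro (I | I)
    exacts [(hh₁ I).mono inter_subset_left, (hh₂ I).mono inter_subset_right]
  obtain ⟨f₀, hf₀, hff₀⟩ := hf' (σ ∘ Sum.inl)
  obtain ⟨g₀, hg₀, hgg₀⟩ := hg' (σ ∘ Sum.inr)
  refine ⟨f₀ * g₀, fun y hy => (hf₀ y hy.1).mul (hg₀ y hy.2), ?_⟩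
  rintro y ⟨⟨hy₁, hy₂⟩, hσ⟩
  simp only [Pi.mul_apply, hff₀ ⟨hy₁, fun I => hσ (.inl I)⟩, hgg₀ ⟨hy₂, fun I => hσ (.inr I)⟩]

theorem SemianalyticOn.comp_continuousLinearMap {f : F → G} {U : Set F}
    (hf : SemianalyticOn f U) (p : E →L[ℝ] F) : SemianalyticOn (f ∘ p) (p ⁻¹' U) := by
  intro x hx
  obtain ⟨V, hV, hxV, hVU, N, h, hh, hf'⟩ := hf (p x) hx
  refine ⟨p ⁻¹' V, hV.preimage p.continuous, hxV, preimage_mono hVU, N, fun I => h I ∘ p,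
    fun I y hy => (hh I _ hy).comp (p.analyticAt y), fun σ => ?_⟩
  obtain ⟨g, hg, hfg⟩ := hf' σ
  exact ⟨g ∘ p, fun y hy => (hg _ hy).comp (p.analyticAt y), fun y hy => hfg ⟨hy.1, hy.2⟩⟩

/- The condition `P` is imposed on the derivatives of the analytic pieces themselves: on a thin
cell, `f` does not determine the derivative of its piece. -/
def HasAnalyticPiecesAt (P : (E →L[ℝ] F) → Prop) (f : E → F) (x : E) : Prop :=
  ∃ V : Set E, IsOpen V ∧ x ∈ V ∧ ∃ (N : ℕ) (h : Fin N → E → ℝ),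
    (∀ I, AnalyticOnNhd ℝ (h I) V) ∧ ∀ σ : Fin N → Sign, ∃ g : E → F,
      AnalyticOnNhd ℝ g V ∧ EqOn f g (saCell V h σ) ∧ P (fderiv ℝ g x)

theorem HasAnalyticPiecesAt.mono {P Q : (E →L[ℝ] F) → Prop} {f : E → F} {x : E}
    (hf : HasAnalyticPiecesAt P f x) (hPQ : ∀ L, P L → Q L) : HasAnalyticPiecesAt Q f x := by
  obtain ⟨V, hV, hxV, N, h, hh, hpieces⟩ := hf
  exact ⟨V, hV, hxV, N, h, hh, fun σ => (hpieces σ).imp fun g hg => ⟨hg.1, hg.2.1, hPQ _ hg.2.2⟩⟩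

theorem semianalyticOn_univ_of_hasAnalyticPiecesAt {P : (E →L[ℝ] F) → Prop} {f : E → F}
    (hf : ∀ x, HasAnalyticPiecesAt P f x) : SemianalyticOn f univ := fun x _ => by
  obtain ⟨V, hV, hxV, N, h, hh, hpieces⟩ := hf x
  exact ⟨V, hV, hxV, subset_univ V, N, h, hh, fun σ => (hpieces σ).imp fun g hg => ⟨hg.1, hg.2.1⟩⟩

theorem SemianalyticOn.exists_isOpen_hasAnalyticPiecesAt_norm_le [CompleteSpace F] {f : E → F}
    (hf : SemianalyticOn f univ) (a : E) :
    ∃ (O : Set E) (B : ℝ), IsOpen O ∧ a ∈ O ∧ ∀ x ∈ O, HasAnalyticPiecesAt (‖·‖ ≤ B) f x := by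
  obtain ⟨V, hV, haV, -, N, h, hh, hpieces⟩ := hf a (mem_univ a)
  choose g hg hfg using hpieces
  obtain ⟨B, hB⟩ := (finite_range fun σ => ‖fderiv ℝ (g σ) a‖).bddAbove
  have hnear : ∀ᶠ x in 𝓝 a, x ∈ V ∧ ∀ σ, ‖fderiv ℝ (g σ) x‖ < ‖fderiv ℝ (g σ) a‖ + 1 :=
    Filter.Eventually.and (hV.mem_nhds haV) <| eventually_all.2 fun σ =>
      ((hg σ).fderiv a haV).continuousAt.norm.eventually (gt_mem_nhds (lt_add_one _))
  obtain ⟨O, hO, hOopen, haO⟩ := eventually_nhds_iff.1 hnear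
  refine ⟨O, B + 1, hOopen, haO, fun x hx => ⟨V, hV, (hO x hx).1, N, h, hh, fun σ =>
    ⟨g σ, hg σ, hfg σ, ((hO x hx).2 σ).le.trans ?_⟩⟩⟩
  exact add_le_add_left (hB (mem_range_self σ)) 1

theorem SemianalyticOn.exists_hasAnalyticPiecesAt_norm_le [CompleteSpace F] {f : E → F}
    (hf : SemianalyticOn f univ) (hsupp : HasCompactSupport f) :
    ∃ M, ∀ x, HasAnalyticPiecesAt (‖·‖ ≤ M) f x := by
  choose O B hO haO hOB using hf.exists_isOpen_hasAnalyticPiecesAt_norm_le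
  obtain ⟨t, ht⟩ := hsupp.isCompact.elim_finite_subcover O hO fun a _ => mem_iUnion.2 ⟨a, haO a⟩
  refine ⟨∑ a ∈ t, |B a|, fun x => ?_⟩
  by_cases hx : x ∈ tsupport f
  · obtain ⟨a, hat, hxa⟩ := mem_iUnion₂.1 (ht hx)
    exact (hOB a x hxa).mono fun L hL => hL.trans <| (le_abs_self _).trans <|
      Finset.single_le_sum (f := fun a => |B a|) (fun _ _ => abs_nonneg _) hat
  · refine ⟨(tsupport f)ᶜ, (isClosed_tsupport f).isOpen_compl, hx, 0, Fin.elim0,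
      fun I => I.elim0, fun _ => ⟨0, analyticOnNhd_const, fun y hy => ?_, ?_⟩⟩
    · exact image_eq_zero_of_notMem_tsupport hy.1
    · simpa using Finset.sum_nonneg fun a _ => abs_nonneg (B a)

end Semianalytic

theorem Set.EqOn.eq_of_mem_closure {X Y : Type*} [TopologicalSpace X] [TopologicalSpace Y]
    [T2Space Y] {f g : X → Y} {s : Set X} {a : X} (h : EqOn f g s) (ha : a ∈ closure s)
    (hf : ContinuousAt f a) (hg : ContinuousAt g a) : f a = g a :=
  haveI := mem_closure_iff_nhdsWithin_neBot.1 ha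
  tendsto_nhds_unique_of_eventuallyEq (hf.tendsto.mono_left nhdsWithin_le_nhds)
    (hg.tendsto.mono_left nhdsWithin_le_nhds) (eventually_nhdsWithin_of_forall h)

theorem eventually_forall_mem_imp_mem_closure {X ι : Type*} [TopologicalSpace X] [Finite ι]
    (s : ι → Set X) (a : X) : ∀ᶠ x in 𝓝 a, ∀ i, x ∈ s i → a ∈ closure (s i) := by
  refine eventually_all.2 fun i => ?_
  by_cases ha : a ∈ closure (s i)
  · exact Eventually.of_forall fun _ _ => ha
  · exact Eventually.mono (isClosed_closure.isOpen_compl.mem_nhds ha) fun x hx hxs =>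
      absurd (subset_closure hxs) hx

theorem Function.Bijective.image_eq_self_of_forall_notMem {α : Type*} {f : α → α} {S U : Set α}
    (hf : Bijective f) (hSU : S ⊆ U) (hfix : ∀ x ∉ S, f x = x) : f '' U = U := by
  refine (image_subset_iff.2 fun x hx => ?_).antisymm fun y hy => ?_
  · by_contra hfx
    have hx' : f x = x := hf.1 (hfix _ fun h => hfx (hSU h))
    exact hfx (by rwa [mem_preimage, hx'])
  · obtain ⟨x, rfl⟩ := hf.2 y
    by_cases hxS : x ∈ S
    · exact ⟨x, hSU hxS, rfl⟩
    · exact ⟨x, by rwa [← hfix x hxS], rfl⟩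

/- Either `τ` agrees with some `σ` satisfying `K` on the block of `σ`, and then `ψ = G σ` on the
cell `τ`; or the cell `τ` is empty, as `ψ y` has the signs of such a `σ` and equals `G σ y`. -/
theorem exists_analyticOnNhd_eqOn_pullback_cell {E F : Type*} [NormedAddCommGroup E]
    [NormedSpace ℝ E] [NormedAddCommGroup F] [NormedSpace ℝ F] {ψ : F → E} {W : Set F} {N : ℕ}
    {h : Fin N → E → ℝ} {G : (Fin N → Sign) → F → E} {K : (Fin N → Sign) → Prop}
    (hG : ∀ σ, AnalyticOnNhd ℝ (G σ) W)
    (hsec : ∀ σ, K σ → ∀ y ∈ W, (∀ i, (σ i).holds (h i (G σ y))) → ψ y = G σ y)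
    (hcell : ∀ y ∈ W, ∃ σ, K σ ∧ (∀ i, (σ i).holds (h i (ψ y))) ∧ G σ y = ψ y)
    (τ : Fin N × (Fin N → Sign) → Sign) :
    ∃ g : F → E, AnalyticOnNhd ℝ g W ∧ EqOn ψ g {y ∈ W | ∀ p, (τ p).holds (h p.1 (G p.2 y))} := by
  by_cases hτ : ∃ σ, K σ ∧ ∀ i, τ (i, σ) = σ i
  · obtain ⟨σ, hK, hστ⟩ := hτ
    exact ⟨G σ, hG σ, fun y hy => hsec σ hK y hy.1 fun i => hστ i ▸ hy.2 (i, σ)⟩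
  · refine ⟨fun _ => 0, analyticOnNhd_const, fun y hy => absurd ?_ hτ⟩
    obtain ⟨σ, hK, hψ, hGψ⟩ := hcell y hy.1
    exact ⟨σ, hK, fun i => (hy.2 (i, σ)).unique (by simpa only [hGψ] using hψ i)⟩

section InverseFunction

variable {E F : Type*} [NormedAddCommGroup E] [NormedSpace ℝ E] [CompleteSpace E]
  [NormedAddCommGroup F] [NormedSpace ℝ F] [CompleteSpace F]

theorem AnalyticAt.exists_localInverse {Φ : E → F} {L : E ≃L[ℝ] F} {a : E}
    (hΦ : AnalyticAt ℝ Φ a) (hL : HasFDerivAt Φ (L : E →L[ℝ] F) a) :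
    ∃ G : F → E, (∀ᶠ y in 𝓝 (Φ a), AnalyticAt ℝ G y) ∧ Tendsto G (𝓝 (Φ a)) (𝓝 a) ∧
      (∀ᶠ y in 𝓝 (Φ a), Φ (G y) = y) ∧ ∀ᶠ x in 𝓝 a, G (Φ x) = x := by
  have hC : ContDiffAt ℝ ω Φ a := hΦ.contDiffAt
  have hS := hC.hasStrictFDerivAt' hL (by simp)
  exact ⟨hC.localInverse hL (by simp), (hC.to_localInverse hL _).analyticAt.eventually_analyticAt,
    hS.localInverse_tendsto, hS.eventually_right_inverse, hS.eventually_left_inverse⟩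

theorem exists_localInverse_of_eqOn_of_mem_closure {e Φ : E → F} {s V : Set E} {x₀ : E}
    (he : ContinuousAt e x₀) (hΦ : AnalyticAt ℝ Φ x₀) (hΦ' : (fderiv ℝ Φ x₀).IsInvertible)
    (heΦ : EqOn e Φ s) (hx₀ : x₀ ∈ closure s) (hV : V ∈ 𝓝 x₀) :
    ∃ G : F → E, (∀ᶠ y in 𝓝 (e x₀), AnalyticAt ℝ G y ∧ G y ∈ V ∧ Φ (G y) = y) ∧
      ∀ᶠ x in 𝓝 x₀, G (Φ x) = x := by
  obtain ⟨L, hL⟩ := hΦ'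
  obtain ⟨G, hGa, hGt, hr, hl⟩ := hΦ.exists_localInverse (hL ▸ hΦ.differentiableAt.hasFDerivAt)
  rw [← heΦ.eq_of_mem_closure hx₀ he hΦ.continuousAt] at hGa hGt hr
  exact ⟨G, hGa.and (Eventually.and (hGt hV) hr), hl⟩

theorem Homeomorph.semianalyticOn_symm (e : E ≃ₜ F)
    (he : ∀ x, HasAnalyticPiecesAt ContinuousLinearMap.IsInvertible e x) :
    SemianalyticOn e.symm univ := by
  refine semianalyticOn_of_finite_index fun y _ => ?_
  obtain ⟨x₀, rfl⟩ := e.surjective y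
  obtain ⟨V, hV, hx₀V, N, h, hh, hpieces⟩ := he x₀
  choose Φ hΦ heΦ hΦ' using hpieces
  -- Only a piece whose cell accumulates at `x₀` agrees with `e` at `x₀`, and can be inverted there.
  set K : (Fin N → Sign) → Prop := fun σ => x₀ ∈ closure (saCell V h σ)
  have hinv : ∀ σ, ∃ G : F → E,
      (∀ᶠ y in 𝓝 (e x₀), AnalyticAt ℝ G y ∧ G y ∈ V ∧ (K σ → Φ σ (G y) = y)) ∧
      (K σ → ∀ᶠ x in 𝓝 x₀, G (Φ σ x) = x) := by
    intro σ
    by_cases hK : K σ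
    · obtain ⟨G, hGy, hGx⟩ := exists_localInverse_of_eqOn_of_mem_closure
        e.continuous.continuousAt (hΦ σ x₀ hx₀V) (hΦ' σ) (heΦ σ) hK (hV.mem_nhds hx₀V)
      exact ⟨G, hGy.mono fun y hy => ⟨hy.1, hy.2.1, fun _ => hy.2.2⟩, fun _ => hGx⟩
    · exact ⟨fun _ => x₀, .of_forall fun _ => ⟨analyticAt_const, hx₀V, hK.elim⟩, hK.elim⟩
  choose G hGy hGx using hinv
  have hx : ∀ᶠ x in 𝓝 x₀, x ∈ V ∧ ∀ σ, (x ∈ saCell V h σ → K σ) ∧ (K σ → G σ (Φ σ x) = x) :=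
    Filter.Eventually.and (hV.mem_nhds hx₀V) <|
      ((eventually_forall_mem_imp_mem_closure _ x₀).and
        (eventually_all.2 fun σ => eventually_imp_distrib_left.2 (hGx σ))).mono
        fun x hx σ => ⟨hx.1 σ, hx.2 σ⟩
  have hcont := e.symm.continuous.tendsto (e x₀)
  rw [e.symm_apply_apply] at hcont
  obtain ⟨W, hW, hWo, hW₀⟩ :=
    eventually_nhds_iff.1 ((eventually_all.2 hGy).and (hcont.eventually hx))
  refine ⟨W, hWo, hW₀, subset_univ _, Fin N × (Fin N → Sign), inferInstance,
    fun p y => h p.1 (G p.2 y), ?_, exists_analyticOnNhd_eqOn_pullback_cell (K := K)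
      (fun σ y hy => ((hW y hy).1 σ).1) (fun σ hK y hy hσ => ?_) (fun y hy => ?_)⟩
  · rintro ⟨i, σ⟩ y hy
    obtain ⟨hGa, hGV, -⟩ := (hW y hy).1 σ
    exact (hh i _ hGV).comp hGa
  · obtain ⟨-, hGV, hΦG⟩ := (hW y hy).1 σ
    exact e.symm_apply_eq.2 ((hΦG hK).symm.trans (heΦ σ ⟨hGV, hσ⟩).symm)
  · obtain ⟨hxV, hxK⟩ := (hW y hy).2
    choose σ hσ using fun i => Sign.exists_holds (h i (e.symm y))
    have hK : K σ := (hxK σ).1 ⟨hxV, hσ⟩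
    refine ⟨σ, hK, hσ, ?_⟩
    rw [← (hxK σ).2 hK, (heΦ σ ⟨hxV, hσ⟩).symm.trans (e.apply_symm_apply y)]

end InverseFunction

theorem ContinuousLinearMap.isInvertible_id_add {E : Type*} [NormedAddCommGroup E]
    [NormedSpace ℝ E] [CompleteSpace E] {A : E →L[ℝ] E} (hA : ‖A‖ < 1) :
    (ContinuousLinearMap.id ℝ E + A).IsInvertible := by
  obtain ⟨u, hu⟩ := isUnit_one_sub_of_norm_lt_one (x := -A) (by rwa [norm_neg])
  refine ⟨ContinuousLinearEquiv.unitsEquiv ℝ E u, ?_⟩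
  ext x
  simp [ContinuousLinearEquiv.unitsEquiv_apply, hu]

section Shear

variable {E : Type*} [NormedAddCommGroup E] [NormedSpace ℝ E]

def shear (f : E → ℝ) (w : E) (x : E) : E := x + f x • w

variable {f : E → ℝ} {w : E}

theorem contDiff_shear {n : WithTop ℕ∞} (hf : ContDiff ℝ n f) : ContDiff ℝ n (shear f w) :=
  contDiff_id.add (hf.smul contDiff_const)

theorem AnalyticOnNhd.shear {V : Set E} (hf : AnalyticOnNhd ℝ f V) :
    AnalyticOnNhd ℝ (shear f w) V :=
  fun x hx => analyticAt_id.add ((hf x hx).smul analyticAt_const)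

theorem HasFDerivAt.shear {f' : E →L[ℝ] ℝ} {x : E} (hf : HasFDerivAt f f' x) :
    HasFDerivAt (shear f w) (.id ℝ E + f'.smulRight w) x :=
  (hasFDerivAt_id x).add (hf.smul_const w)

theorem isInvertible_id_add_smulRight [CompleteSpace E] {f' : E →L[ℝ] ℝ} (h : ‖f'‖ * ‖w‖ < 1) :
    (ContinuousLinearMap.id ℝ E + f'.smulRight w).IsInvertible :=
  ContinuousLinearMap.isInvertible_id_add (by rwa [ContinuousLinearMap.norm_smulRight_apply])

theorem LipschitzWith.exists_hasFDerivAt_shear [CompleteSpace E] {K : NNReal}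
    (hf : LipschitzWith K f) (hKw : K * ‖w‖ < 1) {x : E} (hx : DifferentiableAt ℝ f x) :
    ∃ L : E ≃L[ℝ] E, HasFDerivAt (shear f w) (L : E →L[ℝ] E) x := by
  obtain ⟨L, hL⟩ := isInvertible_id_add_smulRight (f' := fderiv ℝ f x) (w := w)
    (lt_of_le_of_lt (by gcongr; exact norm_fderiv_le_of_lipschitz ℝ hf) hKw)
  exact ⟨L, hL ▸ hx.hasFDerivAt.shear⟩

noncomputable def shearHomeomorph [CompleteSpace E] {K : NNReal} (hf : LipschitzWith K f)
    (hKw : K * ‖w‖ < 1) : E ≃ₜ E :=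
  ApproximatesLinearOn.toHomeomorph (shear f w) (f' := .refl ℝ E) (c := K * ‖w‖₊)
    (by
      rw [ApproximatesLinearOn.approximatesLinearOn_iff_lipschitzOnWith, mul_comm,
        ← ContinuousLinearMap.nnnorm_toSpanSingleton (𝕜 := ℝ)]
      have : shear f w - ⇑(ContinuousLinearEquiv.refl ℝ E : E →L[ℝ] E) =
          ContinuousLinearMap.toSpanSingleton ℝ w ∘ f := by
        ext x
        simp [shear]
      rw [this]
      exact ((ContinuousLinearMap.toSpanSingleton ℝ w).lipschitz.comp hf).lipschitzOnWith)
    (by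
      rcases subsingleton_or_nontrivial E with h | h
      · exact .inl h
      · right
        rw [ContinuousLinearEquiv.refl_symm, ContinuousLinearEquiv.coe_refl,
          ContinuousLinearMap.nnnorm_id, inv_one]
        exact_mod_cast hKw)

theorem shear_apply_of_notMem_tsupport (w : E) {x : E} (hx : x ∉ tsupport f) : shear f w x = x := by
  simp [shear, image_eq_zero_of_notMem_tsupport hx]

theorem HasAnalyticPiecesAt.isInvertible_shear [CompleteSpace E] {x : E} {M : ℝ}
    (hf : HasAnalyticPiecesAt (‖·‖ ≤ M) f x) (hMw : M * ‖w‖ < 1) :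
    HasAnalyticPiecesAt ContinuousLinearMap.IsInvertible (shear f w) x := by
  obtain ⟨V, hV, hxV, N, h, hh, hpieces⟩ := hf
  refine ⟨V, hV, hxV, N, h, hh, fun σ => ?_⟩
  obtain ⟨g, hg, hfg, hgx⟩ := hpieces σ
  refine ⟨shear g w, hg.shear, fun y hy => by simp only [shear, hfg hy], ?_⟩
  rw [(hg x hxV).differentiableAt.hasFDerivAt.shear.fderiv]
  exact isInvertible_id_add_smulRight (lt_of_le_of_lt (by gcongr) hMw)

theorem exists_shear_semianalytic_diffeomorph [CompleteSpace E] {n : WithTop ℕ∞}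
    (hsa : SemianalyticOn f univ) (hC : ContDiff ℝ n f) (hn : n ≠ 0) (hsupp : HasCompactSupport f) :
    ∃ r > 0, ∀ w : E, ‖w‖ < r → ∃ e : E ≃ₜ E, ⇑e = shear f w ∧ ContDiff ℝ n e ∧
      ContDiff ℝ n e.symm ∧ SemianalyticOn e univ ∧ SemianalyticOn e.symm univ := by
  obtain ⟨K, hK⟩ := hC.lipschitzWith_of_hasCompactSupport hsupp hn
  obtain ⟨M, hM⟩ := hsa.exists_hasAnalyticPiecesAt_norm_le hsupp
  refine ⟨(K + |M| + 1)⁻¹, by positivity, fun w hw => ?_⟩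
  have hw' : (K + |M| + 1) * ‖w‖ < 1 := by
    have hpos : (0 : ℝ) < K + |M| + 1 := by positivity
    simpa [hpos.ne'] using mul_lt_mul_of_pos_left hw hpos
  have hKw : K * ‖w‖ < 1 := by nlinarith [abs_nonneg M, norm_nonneg w]
  have hMw : M * ‖w‖ < 1 := by nlinarith [le_abs_self M, K.2, norm_nonneg w]
  choose L hL using fun x => hK.exists_hasFDerivAt_shear hKw (hC.differentiable hn x)
  have hpieces := fun x => (hM x).isInvertible_shear hMw
  exact ⟨shearHomeomorph hK hKw, rfl, contDiff_shear hC, Homeomorph.contDiff_symm _ hL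
    (contDiff_shear hC), semianalyticOn_univ_of_hasAnalyticPiecesAt hpieces,
    (shearHomeomorph hK hKw).semianalyticOn_symm hpieces⟩

end Shear

theorem phiLam_eq_shear (d : ℕ) (h' : (Fin d → ℝ) → ℝ) (κ' : ℝ → ℝ) (lam : ℝ) :
    phiLam d h' κ' lam =
      shear (fun x => h' (x ∘ Fin.castSucc) * κ' (x (Fin.last d))) (lam • Pi.single 0 1) := by
  funext x i
  rcases eq_or_ne i 0 with rfl | hi
  · simp [phiLam, shear, mul_comm]
  · simp [phiLam, shear, hi]

theorem uniqLQG.shear_diffeomorphism_general (d m : ℕ) (hm : 1 ≤ m)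
    (U' : Set (Fin (d + 1) → ℝ))
    (h' : (Fin d → ℝ) → ℝ) (κ' : ℝ → ℝ)
    (hh'sa : SemianalyticOn h' Set.univ) (hh'C : ContDiff ℝ m h')
    (hκ'sa : SemianalyticOn κ' Set.univ) (hκ'C : ContDiff ℝ m κ')
    (hsupp : HasCompactSupport
      (fun x : Fin (d + 1) → ℝ => h' (x ∘ Fin.castSucc) * κ' (x (Fin.last d))))
    (hsuppU : tsupport
      (fun x : Fin (d + 1) → ℝ => h' (x ∘ Fin.castSucc) * κ' (x (Fin.last d))) ⊆ U') :
    ∃ lam₀ : ℝ, 0 < lam₀ ∧ ∀ lam : ℝ, 0 < lam → lam < lam₀ →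
      Function.Bijective (phiLam d h' κ' lam) ∧
      ContDiff ℝ m (phiLam d h' κ' lam) ∧
      ContDiff ℝ m (Function.invFun (phiLam d h' κ' lam)) ∧
      SemianalyticOn (phiLam d h' κ' lam) Set.univ ∧
      SemianalyticOn (Function.invFun (phiLam d h' κ' lam)) Set.univ ∧
      (∀ x ∉ U', phiLam d h' κ' lam x = x) ∧
      phiLam d h' κ' lam '' U' = U' := by
  set F : (Fin (d + 1) → ℝ) → ℝ := fun x => h' (x ∘ Fin.castSucc) * κ' (x (Fin.last d))
  let init : (Fin (d + 1) → ℝ) →L[ℝ] (Fin d → ℝ) := .pi fun i => .proj (Fin.castSucc i)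
  let last : (Fin (d + 1) → ℝ) →L[ℝ] ℝ := .proj (Fin.last d)
  have hsa : SemianalyticOn F univ :=
    (hh'sa.comp_continuousLinearMap init).mul (hκ'sa.comp_continuousLinearMap last)
  have hC : ContDiff ℝ m F := (hh'C.comp init.contDiff).mul (hκ'C.comp last.contDiff)
  obtain ⟨r, hr, hshear⟩ := exists_shear_semianalytic_diffeomorph hsa hC
    (by exact_mod_cast (by omega : m ≠ 0)) hsupp
  refine ⟨r, hr, fun lam hlam hlt => ?_⟩
  obtain ⟨e, he, heC, heC', hesa, hesa'⟩ :=
    hshear (lam • Pi.single 0 1) (by simpa [norm_smul, Pi.norm_single, abs_of_pos hlam] using hlt)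
  have hφ : phiLam d h' κ' lam = e := (phiLam_eq_shear d h' κ' lam).trans he.symm
  have hfix : ∀ x ∉ tsupport F, e x = x := fun x hx => he ▸ shear_apply_of_notMem_tsupport _ hx
  rw [hφ, Function.invFun_eq_of_injective_of_rightInverse e.injective e.apply_symm_apply]
  exact ⟨e.bijective, heC, heC', hesa, hesa', fun x hx => hfix x fun h => hx (hsuppU h),
    e.bijective.image_eq_self_of_forall_notMem hsuppU hfix⟩

/-- **Lemma 4.2.** Let `D = d + 1 ≥ 1`, let `U' ⊆ ℝ^D` be open and `m ≥ 1`.  Let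
`h' : ℝ^{D−1} → ℝ` and `κ' : ℝ → ℝ` be semianalytic functions of class `C^m` with
`κ' 0 = 1` such that `x ↦ h'(x¹,…,x^{D−1})·κ'(x^D)` has compact support contained in `U'`.
Then there is `λ₀ > 0` such that for all `0 < λ < λ₀` the map `φ'_λ` is a `C^m`
diffeomorphism of `ℝ^D`, semianalytic together with its inverse, equal to the identity
outside `U'`, and mapping `U'` onto `U'`. -/
theorem uniqLQG.shear_diffeomorphism (d m : ℕ) (hm : 1 ≤ m)
    (U' : Set (Fin (d + 1) → ℝ)) (hU' : IsOpen U')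
    (h' : (Fin d → ℝ) → ℝ) (κ' : ℝ → ℝ)
    (hh'sa : SemianalyticOn h' Set.univ) (hh'C : ContDiff ℝ m h')
    (hκ'sa : SemianalyticOn κ' Set.univ) (hκ'C : ContDiff ℝ m κ')
    (hκ'0 : κ' 0 = 1)
    (hsupp : HasCompactSupport
      (fun x : Fin (d + 1) → ℝ => h' (x ∘ Fin.castSucc) * κ' (x (Fin.last d))))
    (hsuppU : tsupport
      (fun x : Fin (d + 1) → ℝ => h' (x ∘ Fin.castSucc) * κ' (x (Fin.last d))) ⊆ U') :
    ∃ lam₀ : ℝ, 0 < lam₀ ∧ ∀ lam : ℝ, 0 < lam → lam < lam₀ →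
      Function.Bijective (phiLam d h' κ' lam) ∧
      ContDiff ℝ m (phiLam d h' κ' lam) ∧
      ContDiff ℝ m (Function.invFun (phiLam d h' κ' lam)) ∧
      SemianalyticOn (phiLam d h' κ' lam) Set.univ ∧
      SemianalyticOn (Function.invFun (phiLam d h' κ' lam)) Set.univ ∧
      (∀ x ∉ U', phiLam d h' κ' lam x = x) ∧
      phiLam d h' κ' lam '' U' = U' :=
  uniqLQG.shear_diffeomorphism_general d m hm U' h' κ' hh'sa hh'C hκ'sa hκ'C hsupp hsuppU
end

section
/- Let U ⊆ ℝ^n be open and let h = {h₁,…,h_N} be a finite set of semianalytic real-valued functions defined on U, with associated semi-semianalytic partition P(U,h) (cells defined by sign conditions on the h_I exactly as for semianalytic partitions, but with semianalytic rather than analytic h_I). Then every x ∈ U has an open neighborhood Ũ ⊆ U which admits a semianalytic partition finer than P(Ũ, h), i.e. a semianalytic partition P(Ũ, h̃) such that every cell of P(Ũ, h) is a finite union of cells of P(Ũ, h̃). -/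
instance : DecidableEq Sign := fun a b => by
  cases a <;> cases b <;> first | exact isTrue rfl | exact isFalse (by intro h; cases h)

instance : Fintype Sign :=
  ⟨{.pos, .zero, .neg}, by intro x; cases x <;> simp⟩

/-- The sign of a real number. -/
noncomputable def mySign (r : ℝ) : Sign := if 0 < r then .pos else if r = 0 then .zero else .neg

lemma mySign_holds (r : ℝ) : (mySign r).holds r := by
  unfold mySign
  split_ifs with h1 h2
  · exact h1
  · exact h2
  · exact lt_of_le_of_ne (not_lt.1 h1) h2

lemma mySign_eq_of_holds {s : Sign} {r : ℝ} (h : s.holds r) : mySign r = s := by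
  cases s with
  | pos => simp only [Sign.holds] at h; simp [mySign, h]
  | zero => simp only [Sign.holds] at h; subst h; simp [mySign]
  | neg =>
    simp only [Sign.holds] at h
    simp [mySign, not_lt.2 h.le, h.ne]

/-- **Lemma A.5.** Let `P(U,h)` be a semi-semianalytic partition of an open set
`U ⊆ ℝ^n`, i.e. the cells are defined by sign conditions on a finite family `h` of
*semianalytic* functions on `U`.  Then every `x ∈ U` has an open neighborhood `V ⊆ U`
admitting a semianalytic partition `P(V, ht)` finer than `P(V, h)`: every cell of
`P(V,h)` is a (finite) union of cells of `P(V, ht)`. -/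
theorem uniqLQG.refine_semisemianalytic_partition {n : ℕ}
    {U : Set (Fin n → ℝ)} (hU : IsOpen U)
    {N : ℕ} (h : Fin N → (Fin n → ℝ) → ℝ) (hsa : ∀ I, SemianalyticOn (h I) U) :
    ∀ x ∈ U, ∃ V : Set (Fin n → ℝ), IsOpen V ∧ x ∈ V ∧ V ⊆ U ∧
      ∃ (M : ℕ) (ht : Fin M → (Fin n → ℝ) → ℝ), (∀ J, AnalyticOnNhd ℝ (ht J) V) ∧
        ∀ σ : Fin N → Sign, ∃ s : Set (Fin M → Sign),
          saCell V h σ = ⋃ τ ∈ s, saCell V ht τ := by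
  intro x hx
  choose V hVo hxV hVU NI hI hIa g hga hgeq using fun I => hsa I x hx
  refine ⟨U ∩ ⋂ I, V I, hU.inter (isOpen_iInter_of_finite hVo),
    ⟨hx, Set.mem_iInter.2 hxV⟩, Set.inter_subset_left, ?_⟩
  set W : Set (Fin n → ℝ) := U ∩ ⋂ I, V I with hWdef
  have hWV : ∀ I, W ⊆ V I := fun I =>
    Set.inter_subset_right.trans (Set.iInter_subset _ I)
  let ι := Σ I : Fin N, (Fin (NI I) ⊕ ((Fin (NI I)) → Sign))
  let F : ι → (Fin n → ℝ) → ℝ := fun i => Sum.elim (hI i.1) (g i.1) i.2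
  let e : Fin (Fintype.card ι) ≃ ι := (Fintype.equivFin ι).symm
  refine ⟨Fintype.card ι, fun J => F (e J), ?_, ?_⟩
  · have key : ∀ i : ι, AnalyticOnNhd ℝ (F i) W := by
      rintro ⟨I, j | ρ⟩
      · exact (hIa I j).mono (hWV I)
      · exact (hga I ρ).mono (hWV I)
    exact fun J => key (e J)
  · intro σ
    have hFe : ∀ (i : ι) (w : Fin n → ℝ), F (e (e.symm i)) w = F i w := fun i w => by
      rw [Equiv.apply_symm_apply]
    refine ⟨{τ | saCell W (fun J => F (e J)) τ ⊆ saCell W h σ}, ?_⟩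
    apply Set.Subset.antisymm
    · intro y hy
      set τ : Fin (Fintype.card ι) → Sign := fun J => mySign (F (e J) y) with hτ
      have hyτ : y ∈ saCell W (fun J => F (e J)) τ := ⟨hy.1, fun J => mySign_holds _⟩
      refine Set.mem_biUnion ?_ hyτ
      intro z hz
      refine ⟨hz.1, fun I => ?_⟩
      set ρ : Fin (NI I) → Sign := fun j => τ (e.symm ⟨I, Sum.inl j⟩) with hρ
      have hyc : y ∈ saCell (V I) (hI I) ρ := by
        refine ⟨hWV I hy.1, fun j => ?_⟩
        have : ρ j = mySign (hI I j y) := by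
          show mySign (F (e (e.symm ⟨I, Sum.inl j⟩)) y) = _
          rw [hFe ⟨I, Sum.inl j⟩ y]; rfl
        rw [this]; exact mySign_holds _
      have hzc : z ∈ saCell (V I) (hI I) ρ := by
        refine ⟨hWV I hz.1, fun j => ?_⟩
        have h4 : (ρ j).holds (F (e (e.symm ⟨I, Sum.inl j⟩)) z) := hz.2 _
        rw [hFe ⟨I, Sum.inl j⟩ z] at h4
        exact h4
      have hyg : h I y = g I ρ y := hgeq I ρ hyc
      have hzg : h I z = g I ρ z := hgeq I ρ hzc
      have h1 : τ (e.symm ⟨I, Sum.inr ρ⟩) = mySign (g I ρ y) := by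
        show mySign (F (e (e.symm ⟨I, Sum.inr ρ⟩)) y) = _
        rw [hFe ⟨I, Sum.inr ρ⟩ y]; rfl
      have h2 : (τ (e.symm ⟨I, Sum.inr ρ⟩)).holds (g I ρ z) := by
        have h4 : (τ (e.symm ⟨I, Sum.inr ρ⟩)).holds (F (e (e.symm ⟨I, Sum.inr ρ⟩)) z) := hz.2 _
        rw [hFe ⟨I, Sum.inr ρ⟩ z] at h4
        exact h4
      have h3 : mySign (h I y) = σ I := mySign_eq_of_holds (hy.2 I)
      rw [h1, ← hyg, h3] at h2
      rw [hzg]; exact h2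
    · exact Set.iUnion₂_subset fun τ hτ => hτ
end

section
/- Fix m ≥ 1 and D ≥ 1. Let W ⊆ ℝ^D be a compact subset and let U₁, …, U_N ⊆ ℝ^D be open sets whose union contains W. Then there exist semianalytic functions φ₁, …, φ_N : ℝ^D → ℝ of class C^m such that supp φ_I ⊆ U_I for every I = 1, …, N and Σ_{I=1}^N φ_I(x) = 1 for every x ∈ W. -/
/-!
The basic building block is `t ↦ max t 0 ^ (n + 1)`: it is `C^n` and piecewise polynomial, so
composing with it preserves the class of functions that are analytic on the cells of one global
semianalytic partition, a class also closed under sums and products. Through the plateau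
`1 - posPow n (1 - posPow n t)`, which is `0` for `t ≤ 0` and `1` for `t ≥ 1`, a quadratic
polynomial yields a semianalytic `C^n` bump equal to `1` near a given point, and compactness turns
finitely many of them into a bump `1 - ∏ (1 - b_w)` equal to `1` on a compact set.
Shrinking the cover to compact sets `K_I ⊆ U_I` with `W = ⋃ K_I` and taking such bumps `f_I` for
the `K_I`, the functions `f_I * ∏_{J < I} (1 - f_J)` sum to `1 - ∏_I (1 - f_I)`, which is `1` on `W`.
-/

open Set Topology

noncomputable def posPow (n : ℕ) (t : ℝ) : ℝ := max t 0 ^ (n + 1)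

section PosPow

variable {n : ℕ} {t : ℝ}

lemma posPow_of_nonpos (ht : t ≤ 0) : posPow n t = 0 := by
  simp [posPow, max_eq_right ht]

lemma posPow_of_nonneg (ht : 0 ≤ t) : posPow n t = t ^ (n + 1) := by
  rw [posPow, max_eq_left ht]

lemma one_le_posPow (ht : 1 ≤ t) : 1 ≤ posPow n t := by
  rw [posPow_of_nonneg (zero_le_one.trans ht)]
  exact one_le_pow₀ ht

lemma continuous_posPow : Continuous (posPow n) :=
  (continuous_id.max continuous_const).pow _

lemma hasDerivAt_posPow (n : ℕ) (t : ℝ) :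
    HasDerivAt (posPow (n + 1)) ((n + 2) * posPow n t) t := by
  refine hasDerivAt_of_hasDerivAt_of_ne' (x := 0) (g := fun s => (n + 2) * posPow n s)
    (fun y hy => ?_) continuous_posPow.continuousAt
    (continuous_const.mul continuous_posPow).continuousAt t
  rcases hy.lt_or_gt with hy | hy
  · rw [posPow_of_nonpos hy.le, mul_zero]
    exact (hasDerivAt_const y 0).congr_of_eventuallyEq
      (eventually_lt_nhds hy |>.mono fun s hs => posPow_of_nonpos hs.le)
  · rw [posPow_of_nonneg hy.le]
    convert (hasDerivAt_pow (n + 2) y).congr_of_eventuallyEq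
      (eventually_gt_nhds hy |>.mono fun s hs => posPow_of_nonneg hs.le) using 1
    push_cast
    rfl

lemma contDiff_posPow (n : ℕ) : ContDiff ℝ n (posPow n) := by
  induction n with
  | zero => exact contDiff_zero.mpr continuous_posPow
  | succ n ih =>
    rw [Nat.cast_succ, contDiff_succ_iff_deriv]
    refine ⟨fun t => (hasDerivAt_posPow n t).differentiableAt, by simp, ?_⟩
    rw [funext fun t => (hasDerivAt_posPow n t).deriv]
    exact contDiff_const.mul ih

end PosPow

instance inst_s15 : Finite Sign :=
  Finite.of_surjective ![Sign.pos, .zero, .neg] fun s => by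
    cases s; exacts [⟨0, rfl⟩, ⟨1, rfl⟩, ⟨2, rfl⟩]

def GloballySemianalytic {E : Type*} [NormedAddCommGroup E] [NormedSpace ℝ E]
    (f : E → ℝ) : Prop :=
  ∃ (N : ℕ) (h : Fin N → E → ℝ), (∀ I, AnalyticOnNhd ℝ (h I) univ) ∧
    ∀ σ : Fin N → Sign, ∃ g : E → ℝ, AnalyticOnNhd ℝ g univ ∧ EqOn f g (saCell univ h σ)

namespace GloballySemianalytic

variable {E : Type*} [NormedAddCommGroup E] [NormedSpace ℝ E] {f f₁ f₂ : E → ℝ}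

lemma semianalyticOn (hf : GloballySemianalytic f) : SemianalyticOn f univ := by
  intro x _
  obtain ⟨N, h, hh, hg⟩ := hf
  exact ⟨univ, isOpen_univ, mem_univ x, subset_rfl, N, h, hh, hg⟩

lemma of_finite {ι : Type*} [Finite ι] (h : ι → E → ℝ) (hh : ∀ i, AnalyticOnNhd ℝ (h i) univ)
    (hf : ∀ σ : ι → Sign, ∃ g : E → ℝ, AnalyticOnNhd ℝ g univ ∧
      ∀ x, (∀ i, (σ i).holds (h i x)) → f x = g x) :
    GloballySemianalytic f := by
  obtain ⟨N, ⟨e⟩⟩ := Finite.exists_equiv_fin ι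
  refine ⟨N, h ∘ e.symm, fun I => hh _, fun σ => ?_⟩
  obtain ⟨g, hg, hfg⟩ := hf (σ ∘ e)
  exact ⟨g, hg, fun x hx => hfg x fun i => by simpa using hx.2 (e i)⟩

lemma of_analyticOnNhd (hf : AnalyticOnNhd ℝ f univ) : GloballySemianalytic f :=
  ⟨0, Fin.elim0, fun I => I.elim0, fun _ => ⟨f, hf, fun _ _ => rfl⟩⟩

lemma const (c : ℝ) : GloballySemianalytic fun _ : E => c :=
  of_analyticOnNhd analyticOnNhd_const

lemma comp₂ {k : ℝ × ℝ → ℝ} (hk : AnalyticOnNhd ℝ k univ) (hf₁ : GloballySemianalytic f₁)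
    (hf₂ : GloballySemianalytic f₂) : GloballySemianalytic fun x => k (f₁ x, f₂ x) := by
  obtain ⟨N₁, h₁, hh₁, hg₁⟩ := hf₁
  obtain ⟨N₂, h₂, hh₂, hg₂⟩ := hf₂
  refine of_finite (Sum.elim h₁ h₂) (Sum.rec hh₁ hh₂) fun σ => ?_
  obtain ⟨g₁, hg₁, hfg₁⟩ := hg₁ (σ ∘ Sum.inl)
  obtain ⟨g₂, hg₂, hfg₂⟩ := hg₂ (σ ∘ Sum.inr)
  refine ⟨fun x => k (g₁ x, g₂ x), hk.comp₂ hg₁ hg₂ fun _ _ => mem_univ _, fun x hx => ?_⟩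
  rw [hfg₁ ⟨mem_univ x, fun i => hx (.inl i)⟩, hfg₂ ⟨mem_univ x, fun i => hx (.inr i)⟩]

lemma sub (hf₁ : GloballySemianalytic f₁) (hf₂ : GloballySemianalytic f₂) :
    GloballySemianalytic fun x => f₁ x - f₂ x :=
  comp₂ (analyticOnNhd_fst.sub analyticOnNhd_snd) hf₁ hf₂

lemma mul (hf₁ : GloballySemianalytic f₁) (hf₂ : GloballySemianalytic f₂) :
    GloballySemianalytic fun x => f₁ x * f₂ x :=
  comp₂ (analyticOnNhd_fst.mul analyticOnNhd_snd) hf₁ hf₂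

lemma prod {ι : Type*} (s : Finset ι) {f : ι → E → ℝ} (hf : ∀ i ∈ s, GloballySemianalytic (f i)) :
    GloballySemianalytic fun x => ∏ i ∈ s, f i x := by
  induction s using Finset.cons_induction with
  | empty => simpa using const 1
  | cons a s _ ih =>
    simp only [Finset.prod_cons]
    exact (hf a (s.mem_cons_self a)).mul (ih fun i hi => hf i (Finset.mem_cons_of_mem hi))

lemma comp {ψ : ℝ → ℝ}
    (hψ : ∀ s : Sign, ∃ a : ℝ → ℝ, AnalyticOnNhd ℝ a univ ∧ ∀ t, s.holds t → ψ t = a t)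
    (hf : GloballySemianalytic f) : GloballySemianalytic fun x => ψ (f x) := by
  obtain ⟨N, h, hh, hg⟩ := hf
  choose G hG hfG using hg
  choose a ha hψa using hψ
  -- after refining by the analytic pieces `G τ` of `f`, the sign of `f` is constant on each cell
  refine of_finite (Sum.elim h G) (Sum.rec hh hG) fun σ => ?_
  set τ := σ ∘ Sum.inl
  refine ⟨fun x => a (σ (.inr τ)) (G τ x), (ha _).comp (hG τ) (mapsTo_univ _ _), fun x hx => ?_⟩
  rw [hfG τ ⟨mem_univ x, fun i => hx (.inl i)⟩]
  exact hψa _ _ (hx (.inr τ))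

lemma posPow (n : ℕ) (hf : GloballySemianalytic f) :
    GloballySemianalytic fun x => posPow n (f x) := by
  refine comp (fun s => ?_) hf
  cases s
  · exact ⟨(· ^ (n + 1)), analyticOnNhd_id.pow _, fun t ht => posPow_of_nonneg ht.le⟩
  · exact ⟨0, analyticOnNhd_const, fun t ht => posPow_of_nonpos ht.le⟩
  · exact ⟨0, analyticOnNhd_const, fun t ht => posPow_of_nonpos ht.le⟩

end GloballySemianalytic

noncomputable def plateau (n : ℕ) (t : ℝ) : ℝ := 1 - posPow n (1 - posPow n t)

section Plateau

variable {n : ℕ} {t : ℝ}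

lemma plateau_of_nonpos (ht : t ≤ 0) : plateau n t = 0 := by
  rw [plateau, posPow_of_nonpos ht, sub_zero, posPow_of_nonneg zero_le_one, one_pow, sub_self]

lemma plateau_of_one_le (ht : 1 ≤ t) : plateau n t = 1 := by
  rw [plateau, posPow_of_nonpos (sub_nonpos.mpr (one_le_posPow ht)), sub_zero]

lemma contDiff_plateau (n : ℕ) : ContDiff ℝ n (plateau n) :=
  contDiff_const.sub ((contDiff_posPow n).comp (contDiff_const.sub (contDiff_posPow n)))

lemma GloballySemianalytic.plateau {E : Type*} [NormedAddCommGroup E] [NormedSpace ℝ E]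
    {f : E → ℝ} (n : ℕ) (hf : GloballySemianalytic f) :
    GloballySemianalytic fun x => plateau n (f x) :=
  (const 1).sub (((const 1).sub (hf.posPow n)).posPow n)

end Plateau

section Bump

variable {ι : Type*} [Fintype ι]

lemma exists_bump_of_mem_nhds (n : ℕ) {V : Set (ι → ℝ)} {w : ι → ℝ} (hV : V ∈ 𝓝 w) :
    ∃ b : (ι → ℝ) → ℝ, GloballySemianalytic b ∧ ContDiff ℝ n b ∧ b =ᶠ[𝓝 w] 1 ∧
      tsupport b ⊆ V := by
  obtain ⟨δ, hδ, hδV⟩ := Metric.nhds_basis_closedBall.mem_iff.mp hV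
  set q : (ι → ℝ) → ℝ := fun x => 2 - 2 * ∑ i, ((x i - w i) / δ) ^ 2
  have hq : AnalyticOnNhd ℝ q univ := by
    refine analyticOnNhd_const.sub (analyticOnNhd_const.mul
      (Finset.analyticOnNhd_fun_sum _ fun i _ => ?_))
    exact ((((ContinuousLinearMap.proj (R := ℝ) (φ := fun _ : ι => ℝ) i).analyticOnNhd _).sub
      analyticOnNhd_const).div_const).pow 2
  refine ⟨fun x => plateau n (q x), (GloballySemianalytic.of_analyticOnNhd hq).plateau n,
    (contDiff_plateau n).comp hq.contDiff, ?_, ?_⟩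
  · have hqw : 1 < q w := by simp [q]
    filter_upwards [hq.continuous.continuousAt.eventually (lt_mem_nhds hqw)] with x hx
    exact plateau_of_one_le hx.le
  · have hsupp : Function.support (fun x => plateau n (q x)) ⊆ {x | 0 ≤ q x} := fun x hx => by
      by_contra hneg
      exact hx (plateau_of_nonpos (not_le.mp hneg).le)
    refine (closure_minimal hsupp (isClosed_le continuous_const hq.continuous)).trans
      fun x (hx : 0 ≤ q x) => hδV ?_
    rw [Metric.mem_closedBall, dist_pi_le_iff hδ.le]
    intro i
    have hsum : ∑ j, ((x j - w j) / δ) ^ 2 ≤ 1 := by linarith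
    have hi : ((x i - w i) / δ) ^ 2 ≤ 1 :=
      (Finset.single_le_sum (fun j _ => sq_nonneg ((x j - w j) / δ)) (Finset.mem_univ i)).trans
        hsum
    rw [sq_le_one_iff_abs_le_one, abs_div, abs_of_pos hδ, div_le_one hδ] at hi
    rwa [Real.dist_eq]

lemma exists_bump_of_isCompact (n : ℕ) {K V : Set (ι → ℝ)} (hK : IsCompact K) (hV : IsOpen V)
    (hKV : K ⊆ V) :
    ∃ f : (ι → ℝ) → ℝ, GloballySemianalytic f ∧ ContDiff ℝ n f ∧ EqOn f 1 K ∧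
      tsupport f ⊆ V := by
  choose! b hb_sa hb_C hb_one hb_supp using
    fun w (hw : w ∈ K) => exists_bump_of_mem_nhds n (hV.mem_nhds (hKV hw))
  obtain ⟨t, htK, hKt⟩ := hK.elim_nhds_subcover (fun w => {x | b w x = 1}) hb_one
  refine ⟨fun x => 1 - ∏ w ∈ t, (1 - b w x),
    (GloballySemianalytic.const 1).sub <| GloballySemianalytic.prod t fun w hw =>
      (GloballySemianalytic.const 1).sub (hb_sa w (htK w hw)),
    contDiff_const.sub <| contDiff_prod fun w hw => contDiff_const.sub (hb_C w (htK w hw)),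
    fun x hx => ?_, ?_⟩
  · obtain ⟨w, hw, hbx⟩ := mem_iUnion₂.mp (hKt hx)
    have hprod : ∏ w ∈ t, (1 - b w x) = 0 :=
      Finset.prod_eq_zero hw (by rw [show b w x = 1 from hbx, sub_self])
    simp [hprod]
  · have hsupp : Function.support (fun x => 1 - ∏ w ∈ t, (1 - b w x)) ⊆
        ⋃ w ∈ t, tsupport (b w) := fun x hx => by
      by_contra hout
      simp only [mem_iUnion₂, not_exists] at hout
      exact hx (by simp [Finset.prod_eq_one fun w hw =>
        show 1 - b w x = 1 by rw [image_eq_zero_of_notMem_tsupport (hout w hw), sub_zero]])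
    exact (closure_minimal hsupp (isClosed_biUnion_finset fun w _ => isClosed_tsupport _)).trans
      (iUnion₂_subset fun w hw => hb_supp w (htK w hw))

end Bump

lemma sum_mul_prod_Iio_one_sub_eq_one {ι R : Type*} [Fintype ι] [LinearOrder ι]
    [LocallyFiniteOrderBot ι] [CommRing R] (a : ι → R) {i₀ : ι} (hi₀ : a i₀ = 1) :
    ∑ i, a i * ∏ j ∈ Finset.Iio i, (1 - a j) = 1 := by
  have h := Finset.prod_one_sub_ordered Finset.univ a
  rw [Finset.prod_eq_zero (Finset.mem_univ i₀) (sub_eq_zero.mpr hi₀.symm), eq_comm,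
    sub_eq_zero] at h
  simpa [Finset.filter_gt_eq_Iio] using h.symm

theorem uniqLQG.semianalytic_partition_of_unity_general (m D N : ℕ)
    (W : Set (Fin D → ℝ)) (hW : IsCompact W)
    (U : Fin N → Set (Fin D → ℝ)) (hUopen : ∀ I, IsOpen (U I))
    (hcover : W ⊆ ⋃ I, U I) :
    ∃ φ : Fin N → (Fin D → ℝ) → ℝ,
      (∀ I, SemianalyticOn (φ I) Set.univ ∧ ContDiff ℝ m (φ I) ∧
        tsupport (φ I) ⊆ U I) ∧
      ∀ x ∈ W, ∑ I, φ I x = 1 := by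
  obtain ⟨K, hK, hKU, hWK⟩ :=
    hW.finite_compact_cover Finset.univ U (fun I _ => hUopen I) (by simpa using hcover)
  choose f hf_sa hf_C hf_one hf_supp using
    fun I => exists_bump_of_isCompact m (hK I) (hUopen I) (hKU I)
  refine ⟨fun I x => f I x * ∏ j ∈ Finset.Iio I, (1 - f j x), fun I => ⟨?_, ?_, ?_⟩, ?_⟩
  · exact ((hf_sa I).mul <| GloballySemianalytic.prod _ fun j _ =>
      (GloballySemianalytic.const 1).sub (hf_sa j)).semianalyticOn
  · exact (hf_C I).mul <| contDiff_prod fun j _ => contDiff_const.sub (hf_C j)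
  · exact tsupport_mul_subset_left.trans (hf_supp I)
  · intro x hx
    obtain ⟨I, -, hxI⟩ := mem_iUnion₂.mp (hWK ▸ hx)
    exact sum_mul_prod_Iio_one_sub_eq_one (fun j => f j x) (hf_one I hxI)

/-- **Proposition A.7 (semianalytic partition of unity).** Let `W ⊆ ℝ^D` be compact and
let `U₁, …, U_N` be open sets covering `W`.  Then there are `C^m` semianalytic functions
`φ_I : ℝ^D → ℝ` with `supp φ_I ⊆ U_I` and `∑ I, φ_I = 1` on `W`. -/
theorem uniqLQG.semianalytic_partition_of_unity (m D N : ℕ) (hm : 1 ≤ m) (hD : 1 ≤ D)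
    (W : Set (Fin D → ℝ)) (hW : IsCompact W)
    (U : Fin N → Set (Fin D → ℝ)) (hUopen : ∀ I, IsOpen (U I))
    (hcover : W ⊆ ⋃ I, U I) :
    ∃ φ : Fin N → (Fin D → ℝ) → ℝ,
      (∀ I, SemianalyticOn (φ I) Set.univ ∧ ContDiff ℝ m (φ I) ∧
        tsupport (φ I) ⊆ U I) ∧
      ∀ x ∈ W, ∑ I, φ I x = 1 :=
  uniqLQG.semianalytic_partition_of_unity_general m D N W hW U hUopen hcover
end
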